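/- arXiv:1409.5551 — 2 statements merged into one kernel-verified Lean document; each statement's English description precedes it below -/
import Mathlib

section
/- Let (a_k)_{k∈ℕ} and (b_k)_{k∈ℕ} be two real sequences in ℓ¹(ℕ) such that Σ_{k∈ℕ} a_k^p = Σ_{k∈ℕ} b_k^p for every integer p ≥ 1. Then for every nonzero real number x, the set {k : a_k = x} is finite, the set {k : b_k = x} is finite, and these two sets have the same cardinality; equivalently, there is a bijection between {k : a_k ≠ 0} and {k : b_k ≠ 0} under which corresponding terms are equal. -/
/-!
Suppose some nonzero value occurs a different number of times in `a` and in `b`. Only finitely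
many terms have modulus at least that of such a value, so there is a discrepant value of maximal
modulus `r`. Write `D y` for the difference of the two multiplicities. In `∑ a_k^p - ∑ b_k^p = 0`
the terms of modulus `> r` cancel, and the terms of modulus `< r` are `o(r^p)` by dominated
convergence. Hence `D r + (-1)^p D (-r) → 0`, and taking even and odd `p` gives `D (±r) = 0`,
a contradiction. Equal finite multiplicities of the nonzero values then give the bijection
fibre by fibre.
-/

open Filter Asymptotics

theorem Finset.sum_comp_eq_sum_ncard_smul {ι R M : Type*} [DecidableEq R] [AddCommMonoid M]
    {c : ι → R} {S : Finset ι} {V : Finset R} (hS : ∀ k, k ∈ S ↔ c k ∈ V) (f : R → M) :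
    ∑ k ∈ S, f (c k) = ∑ y ∈ V, {k | c k = y}.ncard • f y := by
  rw [← Finset.sum_fiberwise_of_maps_to fun k hk => (hS k).1 hk]
  refine Finset.sum_congr rfl fun y hy => ?_
  have hfiber : {k | c k = y} = ↑(S.filter (c · = y)) := by
    ext k
    simp only [Set.mem_ofPred_eq, Finset.coe_filter, hS k, iff_and_self]
    rintro rfl
    exact hy
  rw [hfiber, Set.ncard_coe_finset]
  exact Finset.sum_eq_card_nsmul fun k hk => by rw [(Finset.mem_filter.1 hk).2]

section PowerSums

variable {c : ℕ → ℝ}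

theorem Summable.finite_setOf_le_abs (hc : Summable fun k => |c k|) {r : ℝ} (hr : 0 < r) :
    {k | r ≤ |c k|}.Finite := by
  have h := hc.tendsto_cofinite_zero.eventually_lt_const hr
  rw [eventually_cofinite] at h
  simpa only [not_lt] using h

theorem Summable.finite_setOf_eq (hc : Summable fun k => |c k|) {x : ℝ} (hx : x ≠ 0) :
    {k | c k = x}.Finite :=
  (hc.finite_setOf_le_abs (abs_pos.mpr hx)).subset fun k (hk : c k = x) => by
    simp [hk]

theorem Summable.pow_of_abs (hc : Summable fun k => |c k|) {p : ℕ} (hp : 1 ≤ p) :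
    Summable fun k => c k ^ p := by
  refine .of_norm_bounded_eventually hc ?_
  filter_upwards [hc.tendsto_cofinite_zero.eventually_lt_const one_pos] with k hk
  rw [Real.norm_eq_abs, abs_pow]
  exact pow_le_of_le_one (abs_nonneg _) hk.le (by omega)

theorem Summable.tsum_pow_abs_lt_isLittleO (hc : Summable fun k => |c k|) {r : ℝ} (hr : 0 < r) :
    (fun p : ℕ => ∑' k : {k | |c k| < r}, c k ^ p) =o[atTop] fun p => r ^ p := by
  rw [isLittleO_iff_tendsto' (.of_forall fun p h => absurd h (pow_ne_zero p hr.ne'))]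
  simp_rw [← tsum_div_const, ← div_pow]
  rw [← tsum_zero]
  have hlt (k : {k | |c k| < r}) : |c k / r| < 1 := by
    rw [abs_div, abs_of_pos hr, div_lt_one hr]
    exact k.2
  refine tendsto_tsum_of_dominated_convergence ((hc.subtype _).div_const r)
    (fun k => tendsto_pow_atTop_nhds_zero_of_abs_lt_one (hlt k)) ?_
  filter_upwards [eventually_ge_atTop 1] with p hp k
  rw [Real.norm_eq_abs, abs_pow]
  refine (pow_le_of_le_one (abs_nonneg _) (hlt k).le (by omega)).trans_eq ?_
  simp [abs_div, abs_of_pos hr]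

theorem Summable.tsum_pow_eq_sum_ncard_mul_add (hc : Summable fun k => |c k|) {r : ℝ}
    (hr : 0 < r) {V : Finset ℝ} (hV : ∀ y ∈ V, r ≤ |y|) (hcV : ∀ k, r ≤ |c k| → c k ∈ V)
    {p : ℕ} (hp : 1 ≤ p) :
    ∑' k, c k ^ p =
      ∑ y ∈ V, ({k | c k = y}.ncard : ℝ) * y ^ p + ∑' k : {k | |c k| < r}, c k ^ p := by
  set S := (hc.finite_setOf_le_abs hr).toFinset
  have hS : ({k | |c k| < r}ᶜ : Set ℕ) = S := by
    ext k
    simp [S]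
  have hSV (k : ℕ) : k ∈ S ↔ c k ∈ V := by
    simpa [S] using ⟨hcV k, hV _⟩
  rw [← (hc.pow_of_abs hp).tsum_subtype_add_tsum_subtype_compl {k | |c k| < r}, hS,
    Finset.tsum_subtype' S fun k => c k ^ p, add_comm,
    Finset.sum_comp_eq_sum_ncard_smul hSV (· ^ p)]
  simp only [nsmul_eq_mul]

end PowerSums

theorem eq_zero_of_isLittleO_pow {d e r : ℝ} (hr : 0 < r)
    (h : (fun p : ℕ => d * r ^ p + e * (-r) ^ p) =o[atTop] fun p => r ^ p) :
    d = 0 ∧ e = 0 := by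
  have hlim : Tendsto (fun p : ℕ => d + e * (-1) ^ p) atTop (nhds 0) := by
    refine h.tendsto_div_nhds_zero.congr fun p => ?_
    rw [neg_pow']
    field_simp
  have heven : d + e = 0 := by
    refine tendsto_const_nhds_iff.1 ((hlim.comp (StrictMono.tendsto_atTop (φ := (2 * ·))
      fun m n (h : m < n) => by dsimp only; omega)).congr fun n => ?_)
    simp [pow_mul]
  have hodd : d - e = 0 := by
    refine tendsto_const_nhds_iff.1 ((hlim.comp (StrictMono.tendsto_atTop (φ := (2 * · + 1))
      fun m n (h : m < n) => by dsimp only; omega)).congr fun n => ?_)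
    simp [pow_succ, pow_mul, sub_eq_add_neg]
  constructor <;> linarith

section EqualPowerSums

variable {a b : ℕ → ℝ}

theorem ncard_eq_of_tsum_pow_eq_of_forall_lt_abs (ha : Summable fun k => |a k|)
    (hb : Summable fun k => |b k|) (hpow : ∀ p : ℕ, 1 ≤ p → ∑' k, a k ^ p = ∑' k, b k ^ p)
    {r : ℝ} (hr : 0 < r) (hbig : ∀ y, r < |y| → {k | a k = y}.ncard = {k | b k = y}.ncard)
    {x : ℝ} (hx : |x| = r) : {k | a k = x}.ncard = {k | b k = x}.ncard := by
  classical
  set V : Finset ℝ := {r, -r} ∪ ((ha.finite_setOf_le_abs hr).toFinset.image a ∪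
    (hb.finite_setOf_le_abs hr).toFinset.image b)
  have hV : ∀ y ∈ V, r ≤ |y| := by
    intro y hy
    simp only [V, Finset.mem_union, Finset.mem_insert, Finset.mem_singleton, Finset.mem_image,
      Set.Finite.mem_toFinset, Set.mem_ofPred_eq] at hy
    rcases hy with (rfl | rfl) | ⟨k, hk, rfl⟩ | ⟨k, hk, rfl⟩ <;> simp [abs_of_pos hr, *]
  have haV (k : ℕ) (hk : r ≤ |a k|) : a k ∈ V :=
    Finset.mem_union_right _ <| Finset.mem_union_left _ <| Finset.mem_image_of_mem a <| by
      simpa using hk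
  have hbV (k : ℕ) (hk : r ≤ |b k|) : b k ∈ V :=
    Finset.mem_union_right _ <| Finset.mem_union_right _ <| Finset.mem_image_of_mem b <| by
      simpa using hk
  set D : ℝ → ℝ := fun y => {k | a k = y}.ncard - {k | b k = y}.ncard
  have hsum (p : ℕ) : ∑ y ∈ V, D y * y ^ p = D r * r ^ p + D (-r) * (-r) ^ p := by
    rw [← Finset.sum_pair (f := fun y => D y * y ^ p) (neg_lt_self hr).ne', eq_comm]
    refine Finset.sum_subset Finset.subset_union_left fun y hyV hy => ?_
    have hry : r < |y| := by
      refine (hV y hyV).lt_of_ne fun h => hy ?_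
      rcases abs_choice y with h' | h' <;> simp [h, h']
    simp [D, hbig y hry]
  have hkey : ∀ᶠ p in atTop, D r * r ^ p + D (-r) * (-r) ^ p =
      ∑' k : {k | |b k| < r}, b k ^ p - ∑' k : {k | |a k| < r}, a k ^ p := by
    filter_upwards [eventually_ge_atTop 1] with p hp
    have hpow_p := hpow p hp
    rw [ha.tsum_pow_eq_sum_ncard_mul_add hr hV haV hp,
      hb.tsum_pow_eq_sum_ncard_mul_add hr hV hbV hp] at hpow_p
    rw [← hsum]
    simp only [D, sub_mul, Finset.sum_sub_distrib]
    linarith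
  have hD := eq_zero_of_isLittleO_pow hr
    (((hb.tsum_pow_abs_lt_isLittleO hr).sub (ha.tsum_pow_abs_lt_isLittleO hr)).congr'
      (hkey.mono fun p hp => hp.symm) EventuallyEq.rfl)
  have hDx : D x = 0 := by
    obtain rfl | rfl : x = r ∨ x = -r := by
      rcases abs_choice x with h | h <;> [left; right] <;> linarith
    exacts [hD.1, hD.2]
  exact_mod_cast sub_eq_zero.1 hDx

theorem ncard_eq_of_tsum_pow_eq (ha : Summable fun k => |a k|)
    (hb : Summable fun k => |b k|) (hpow : ∀ p : ℕ, 1 ≤ p → ∑' k, a k ^ p = ∑' k, b k ^ p)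
    {x : ℝ} (hx : x ≠ 0) : {k | a k = x}.ncard = {k | b k = x}.ncard := by
  by_contra hne
  set bad := {y | |x| ≤ |y| ∧ {k | a k = y}.ncard ≠ {k | b k = y}.ncard}
  have hbad : bad ⊆ a '' {k | |x| ≤ |a k|} ∪ b '' {k | |x| ≤ |b k|} := by
    rintro y ⟨hxy, hy⟩
    rcases Nat.eq_zero_or_pos {k | a k = y}.ncard with h | h
    · obtain ⟨k, rfl⟩ := Set.nonempty_of_ncard_ne_zero (h ▸ hy).symm
      exact Or.inr ⟨k, hxy, rfl⟩
    · obtain ⟨k, rfl⟩ := Set.nonempty_of_ncard_ne_zero h.ne'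
      exact Or.inl ⟨k, hxy, rfl⟩
  have hbad_fin : bad.Finite :=
    (((ha.finite_setOf_le_abs (abs_pos.2 hx)).image a).union
      ((hb.finite_setOf_le_abs (abs_pos.2 hx)).image b)).subset hbad
  obtain ⟨y, ⟨hxy, hy⟩, hmax⟩ := Set.exists_max_image bad (|·|) hbad_fin ⟨x, le_rfl, hne⟩
  refine hy (ncard_eq_of_tsum_pow_eq_of_forall_lt_abs ha hb hpow ((abs_pos.2 hx).trans_le hxy)
    (fun z hz => ?_) rfl)
  by_contra hz'
  exact (hmax z ⟨hxy.trans hz.le, hz'⟩).not_gt hz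

end EqualPowerSums

theorem exists_equiv_of_nonempty_equiv_fiber {α β M : Type*} [Zero M] {f : α → M} {g : β → M}
    (h : ∀ c ≠ 0, Nonempty ({x | f x = c} ≃ {y | g y = c})) :
    ∃ e : {x | f x ≠ 0} ≃ {y | g y ≠ 0}, ∀ x : {x | f x ≠ 0}, f x = g (e x) := by
  have fiber (c : M) :
      Nonempty ({x : {x | f x ≠ 0} // f x = c} ≃ {y : {y | g y ≠ 0} // g y = c}) := by
    rcases eq_or_ne c 0 with rfl | hc
    · have : IsEmpty {x : {x | f x ≠ 0} // f x = 0} := ⟨fun x => x.1.2 x.2⟩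
      have : IsEmpty {y : {y | g y ≠ 0} // g y = 0} := ⟨fun y => y.1.2 y.2⟩
      exact ⟨Equiv.equivOfIsEmpty _ _⟩
    · obtain ⟨e⟩ := h c hc
      exact ⟨(Equiv.subtypeSubtypeEquivSubtype fun hx => ne_of_eq_of_ne hx hc).trans
        (e.trans (Equiv.subtypeSubtypeEquivSubtype fun hy => ne_of_eq_of_ne hy hc).symm)⟩
  exact ⟨Equiv.ofFiberEquiv fun c => (fiber c).some,
    fun x => (Equiv.ofFiberEquiv_map (fun c => (fiber c).some) x).symm⟩

/-- Two ℓ¹ sequences with equal power sums for all p ≥ 1 have, for each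
nonzero value x, finitely many terms equal to x, in equal number; equivalently their
nonzero terms are in value-preserving bijection. -/
theorem stmt_0 (a b : ℕ → ℝ)
    (ha : Summable fun k => |a k|) (hb : Summable fun k => |b k|)
    (hpow : ∀ p : ℕ, 1 ≤ p → ∑' k, (a k) ^ p = ∑' k, (b k) ^ p) :
    (∀ x : ℝ, x ≠ 0 →
      {k | a k = x}.Finite ∧ {k | b k = x}.Finite ∧
        {k | a k = x}.ncard = {k | b k = x}.ncard) ∧
    ∃ e : {k | a k ≠ 0} ≃ {k | b k ≠ 0}, ∀ k : {k | a k ≠ 0}, a k.1 = b (e k).1 := by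
  have hcount {x : ℝ} (hx : x ≠ 0) := ncard_eq_of_tsum_pow_eq ha hb hpow hx
  refine ⟨fun x hx => ⟨ha.finite_setOf_eq hx, hb.finite_setOf_eq hx, hcount hx⟩,
    exists_equiv_of_nonempty_equiv_fiber fun x hx => ?_⟩
  have := (ha.finite_setOf_eq hx).to_subtype
  have := (hb.finite_setOf_eq hx).to_subtype
  exact Finite.card_eq.1 (by rw [Nat.card_coe_set_eq, Nat.card_coe_set_eq, hcount hx])
end

section
/- Let X be a real random variable whose moment generating function t ↦ E[e^{tX}] is finite in a neighborhood of 0, and let κ_j(X) denote the j-th derivative at 0 of t ↦ log E[e^{tX}]. Then for every integer m ≥ 0: E[X^{m+1}] = Σ_{i=0}^m binom(m,i) κ_{i+1}(X) E[X^{m−i}]. -/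
open MeasureTheory ProbabilityTheory Filter Topology

/-!
Since `cgf = log ∘ mgf` and the mgf is positive, `mgf' = cgf' * mgf` on the interior of the
domain of the mgf. Both functions are analytic there, so differentiating this identity `m` times
at `0` with the Leibniz rule expresses the `(m+1)`-st derivative of the mgf, that is the moment
`E[X^(m+1)]`, through the cumulants and the lower moments `E[X^(m-i)]`.
-/

namespace ProbabilityTheory

variable {Ω : Type*} {mΩ : MeasurableSpace Ω} {X : Ω → ℝ} {μ : Measure Ω} {v : ℝ}

lemma deriv_mgf_eq_deriv_cgf_mul_mgf (h : v ∈ interior (integrableExpSet X μ)) :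
    deriv (mgf X μ) v = deriv (cgf X μ) v * mgf X μ v := by
  rcases eq_or_ne μ 0 with rfl | hμ
  · simp
  have hpos : 0 < mgf X μ v := mgf_pos' hμ (interior_subset (s := integrableExpSet X μ) h)
  rw [deriv_cgf h, deriv_mgf h, div_mul_cancel₀ _ hpos.ne']

lemma iteratedDeriv_succ_mgf (h : v ∈ interior (integrableExpSet X μ)) (n : ℕ) :
    iteratedDeriv (n + 1) (mgf X μ) v = ∑ i ∈ Finset.range (n + 1),
      n.choose i * iteratedDeriv (i + 1) (cgf X μ) v * iteratedDeriv (n - i) (mgf X μ) v := by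
  have hderiv : deriv (mgf X μ) =ᶠ[𝓝 v] deriv (cgf X μ) * mgf X μ :=
    eventually_of_mem (isOpen_interior.mem_nhds h) fun _ hu ↦ deriv_mgf_eq_deriv_cgf_mul_mgf hu
  rw [iteratedDeriv_succ', hderiv.iteratedDeriv_eq,
    iteratedDeriv_mul (analyticAt_cgf h).deriv.contDiffAt (analyticAt_mgf h).contDiffAt]
  simp only [iteratedDeriv_succ']

end ProbabilityTheory

theorem stmt_14_general {Ω : Type*} [MeasurableSpace Ω] (P : Measure Ω)
    (X : Ω → ℝ)
    (hmgf : ∃ ε > (0 : ℝ), ∀ t : ℝ, |t| < ε → Integrable (fun ω => Real.exp (t * X ω)) P)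
    (κ : ℕ → ℝ)
    (hκ : ∀ j : ℕ, κ j =
      iteratedDeriv j (fun t : ℝ => Real.log (∫ ω, Real.exp (t * X ω) ∂P)) 0) :
    ∀ m : ℕ, ∫ ω, X ω ^ (m + 1) ∂P =
      ∑ i ∈ Finset.range (m + 1), (m.choose i : ℝ) * κ (i + 1) * ∫ ω, X ω ^ (m - i) ∂P := by
  obtain ⟨ε, hε, hint⟩ := hmgf
  have h0 : 0 ∈ interior (integrableExpSet X P) :=
    mem_interior_iff_mem_nhds.2 <| mem_of_superset (Metric.ball_mem_nhds 0 hε) fun t ht ↦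
      hint t (by simpa using ht)
  have hmoment (n : ℕ) : ∫ ω, X ω ^ n ∂P = iteratedDeriv n (mgf X P) 0 := by
    simp [iteratedDeriv_mgf_zero h0]
  intro m
  simp only [hmoment, hκ]
  -- the function differentiated in `hκ` is `cgf X P` unfolded
  exact iteratedDeriv_succ_mgf h0 m

/-- If the moment generating function of X is finite near 0 and
κ_j(X) is the j-th derivative at 0 of t ↦ log E[e^{tX}], then for every m ≥ 0,
E[X^{m+1}] = ∑_{i=0}^m binom(m,i) κ_{i+1}(X) E[X^{m−i}]. -/
theorem stmt_14 {Ω : Type*} [MeasurableSpace Ω] (P : Measure Ω) [IsProbabilityMeasure P]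
    (X : Ω → ℝ) (hX : Measurable X)
    (hmgf : ∃ ε > (0 : ℝ), ∀ t : ℝ, |t| < ε → Integrable (fun ω => Real.exp (t * X ω)) P)
    (κ : ℕ → ℝ)
    (hκ : ∀ j : ℕ, κ j =
      iteratedDeriv j (fun t : ℝ => Real.log (∫ ω, Real.exp (t * X ω) ∂P)) 0) :
    ∀ m : ℕ, ∫ ω, X ω ^ (m + 1) ∂P =
      ∑ i ∈ Finset.range (m + 1), (m.choose i : ℝ) * κ (i + 1) * ∫ ω, X ω ^ (m - i) ∂P :=
  stmt_14_general P X hmgf κ hκ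
end
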